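/- arXiv:2505.02771 — 5 statements merged into one kernel-verified Lean document; each statement's English description precedes it below -/
import Mathlib

section
/- If both connected nonempty graphs G and H are bipartite and each contains at least one edge, then their tensor product G × H is disconnected. -/
open SimpleGraph

/-- The tensor (categorical) product of two graphs. -/
def tensorProd {α β : Type*} (G : SimpleGraph α) (H : SimpleGraph β) :
    SimpleGraph (α × β) where
  Adj x y := G.Adj x.1 y.1 ∧ H.Adj x.2 y.2
  symm := ⟨fun _ _ h => ⟨h.1.symm, h.2.symm⟩⟩
  loopless := ⟨fun x h => G.loopless.irrefl x.1 h.1⟩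

lemma tensor_walk_invariant {α β : Type*} {G : SimpleGraph α} {H : SimpleGraph β}
    (C : G.Coloring (Fin 2)) (D : H.Coloring (Fin 2)) {x y : α × β}
    (w : (tensorProd G H).Walk x y) :
    (C x.1 = D x.2) ↔ (C y.1 = D y.2) := by
  induction w with
  | nil => rfl
  | cons h _ ih =>
    refine Iff.trans ?_ ih
    have h1 := C.valid h.1
    have h2 := D.valid h.2
    omega

/-- if both connected nonempty graphs `G` and `H` are bipartite
(2-colorable) and each has at least one edge, then their tensor product is
disconnected. -/
theorem tensor_product_disconnected_of_bipartite {α β : Type*} [Fintype α] [Fintype β]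
    (G : SimpleGraph α) (H : SimpleGraph β)
    (hG : G.Connected) (hH : H.Connected)
    (hGb : G.Colorable 2) (hHb : H.Colorable 2)
    (hGe : ∃ a b, G.Adj a b) (hHe : ∃ a b, H.Adj a b) :
    ¬ (tensorProd G H).Connected := by
  intro hconn
  obtain ⟨a, b, hab⟩ := hGe
  obtain ⟨c, _, _⟩ := hHe
  obtain ⟨C⟩ := hGb
  obtain ⟨D⟩ := hHb
  obtain ⟨w⟩ := hconn.preconnected (a, c) (b, c)
  have key := tensor_walk_invariant C D w
  have hne := C.valid hab
  simp only at key
  omega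
end

section
/- There are uncountably many (continuum many) graph properties P such that the Hankel matrix H(⊔, P) for the disjoint union operation has rank at most 2 over GF(2). -/
open SimpleGraph

/-- A finite graph: a simple graph on `Fin n` for some `n`. -/
abbrev Gr : Type := Σ n : ℕ, SimpleGraph (Fin n)

/-- Disjoint union of two finite graphs, re-indexed along `Fin m ⊕ Fin n ≃ Fin (m + n)`. -/
def grSum (G H : Gr) : Gr :=
  ⟨G.1 + H.1, (G.2 ⊕g H.2).map finSumFinEquiv.toEmbedding⟩

open Classical in
/-- Row of the Hankel matrix of a binary graph operation `op` and graph property `P`. -/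
noncomputable def hankelRow (op : Gr → Gr → Gr) (P : Set Gr) (G : Gr) : Gr → ZMod 2 :=
  fun H => if op G H ∈ P then 1 else 0

/-- The rank over GF(2) of the Hankel matrix: dimension of the span of its rows. -/
noncomputable def hankelRank (op : Gr → Gr → Gr) (P : Set Gr) : Cardinal :=
  Module.rank (ZMod 2) (Submodule.span (ZMod 2) (Set.range (hankelRow op P)))

/-- The class of connected graphs whose number of vertices lies in `A`. -/
def Pconn (A : Set ℕ) : Set Gr := {G | G.2.Connected ∧ G.1 ∈ A}

/-- A graph property: an isomorphism-closed class of finite graphs. -/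
def IsoClosed (P : Set Gr) : Prop :=
  ∀ G H : Gr, Nonempty (G.2 ≃g H.2) → (G ∈ P ↔ H ∈ P)

section lemmas
variable {α β : Type*} {G : SimpleGraph α} {H : SimpleGraph β}

lemma sum_reachable_isLeft {u v : α ⊕ β} (h : (G ⊕g H).Reachable u v) :
    u.isLeft = v.isLeft := by
  obtain ⟨w⟩ := h
  induction w with
  | nil => rfl
  | cons hab p ih =>
    rename_i a b c
    have : a.isLeft = b.isLeft := by
      cases a <;> cases b <;> simp_all [SimpleGraph.sum_adj]
    exact this.trans ih

def isoEmptySum [IsEmpty α] (G : SimpleGraph α) (H : SimpleGraph β) : (G ⊕g H) ≃g H :=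
  ⟨Equiv.emptySum α β, by
    intro u v
    cases u with
    | inl a => exact isEmptyElim a
    | inr a => cases v with
      | inl b => exact isEmptyElim b
      | inr b => simp [SimpleGraph.sum_adj]⟩

def isoSumEmpty [IsEmpty β] (G : SimpleGraph α) (H : SimpleGraph β) : (G ⊕g H) ≃g G :=
  (Iso.sumComm).trans (isoEmptySum H G)
end lemmas

lemma conn_zero {G : Gr} (h : G.1 = 0) : ¬ G.2.Connected := by
  intro hc
  obtain ⟨v⟩ := hc.nonempty
  rw [h] at v
  exact v.elim0

lemma conn_grSum (G H : Gr) :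
    (grSum G H).2.Connected ↔ (G.1 = 0 ∧ H.2.Connected) ∨ (H.1 = 0 ∧ G.2.Connected) := by
  show ((G.2 ⊕g H.2).map finSumFinEquiv.toEmbedding).Connected ↔ _
  refine (Iso.map finSumFinEquiv (G.2 ⊕g H.2)).connected_iff.symm.trans ?_
  constructor
  · intro h
    rcases Nat.eq_zero_or_pos G.1 with h0 | hGpos
    · have : IsEmpty (Fin G.1) := by rw [h0]; infer_instance
      exact Or.inl ⟨h0, (isoEmptySum G.2 H.2).connected_iff.mp h⟩
    rcases Nat.eq_zero_or_pos H.1 with h0 | hHpos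
    · have : IsEmpty (Fin H.1) := by rw [h0]; infer_instance
      exact Or.inr ⟨h0, (isoSumEmpty G.2 H.2).connected_iff.mp h⟩
    · exfalso
      have hr := h.preconnected (Sum.inl ⟨0, hGpos⟩) (Sum.inr ⟨0, hHpos⟩)
      simpa using sum_reachable_isLeft hr
  · rintro (⟨h0, hc⟩ | ⟨h0, hc⟩)
    · have : IsEmpty (Fin G.1) := by rw [h0]; infer_instance
      exact (isoEmptySum G.2 H.2).connected_iff.mpr hc
    · have : IsEmpty (Fin H.1) := by rw [h0]; infer_instance
      exact (isoSumEmpty G.2 H.2).connected_iff.mpr hc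

open Classical in
noncomputable def fA (A : Set ℕ) : Gr → ZMod 2 :=
  fun H => if H.2.Connected ∧ H.1 ∈ A then 1 else 0

noncomputable def e0 : Gr → ZMod 2 := fun H => if H.1 = 0 then 1 else 0

lemma row_mem (A : Set ℕ) (G : Gr) :
    hankelRow grSum (Pconn A) G ∈ ({fA A, e0, 0} : Set (Gr → ZMod 2)) := by
  classical
  rcases Nat.eq_zero_or_pos G.1 with h0 | hpos
  · left
    funext H
    have : grSum G H ∈ Pconn A ↔ (H.2.Connected ∧ H.1 ∈ A) := by
      unfold Pconn
      rw [Set.mem_setOf_eq, conn_grSum]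
      constructor
      · rintro ⟨(⟨_, hc⟩ | ⟨hH0, hc⟩), hA⟩
        · have hA' : G.1 + H.1 ∈ A := hA
          exact ⟨hc, by rwa [h0, zero_add] at hA'⟩
        · exact absurd hc (conn_zero h0)
      · rintro ⟨hc, hA⟩
        refine ⟨Or.inl ⟨h0, hc⟩, ?_⟩
        show G.1 + H.1 ∈ A
        rwa [h0, zero_add]
    exact if_congr this rfl rfl
  · have hmem : ∀ H : Gr, grSum G H ∈ Pconn A ↔ (H.1 = 0 ∧ G.2.Connected ∧ G.1 ∈ A) := by
      intro H
      unfold Pconn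
      rw [Set.mem_setOf_eq, conn_grSum]
      constructor
      · rintro ⟨(⟨hG0, _⟩ | ⟨hH0, hc⟩), hA⟩
        · omega
        · have hA' : G.1 + H.1 ∈ A := hA
          exact ⟨hH0, hc, by rwa [hH0, add_zero] at hA'⟩
      · rintro ⟨hH0, hc, hA⟩
        refine ⟨Or.inr ⟨hH0, hc⟩, ?_⟩
        show G.1 + H.1 ∈ A
        rwa [hH0, add_zero]
    by_cases hG : G.2.Connected ∧ G.1 ∈ A
    · right; left
      funext H
      exact if_congr ((hmem H).trans ⟨And.left, fun h => ⟨h, hG.1, hG.2⟩⟩) rfl rfl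
    · right; right
      funext H
      show (if grSum G H ∈ Pconn A then (1:ZMod 2) else 0) = 0
      rw [if_neg (fun h => hG ((hmem H).mp h).2)]

lemma rank_le_two (A : Set ℕ) : hankelRank grSum (Pconn A) ≤ 2 := by
  unfold hankelRank
  have hsub : Set.range (hankelRow grSum (Pconn A)) ⊆ {fA A, e0, 0} := by
    rintro _ ⟨G, rfl⟩; exact row_mem A G
  calc Module.rank (ZMod 2) (Submodule.span (ZMod 2) (Set.range (hankelRow grSum (Pconn A))))
      ≤ Module.rank (ZMod 2) (Submodule.span (ZMod 2) ({fA A, e0, 0} : Set (Gr → ZMod 2))) :=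
        Submodule.rank_mono (Submodule.span_mono hsub)
    _ ≤ Cardinal.mk ({fA A, e0} : Set (Gr → ZMod 2)) := by
        have : Submodule.span (ZMod 2) ({fA A, e0, 0} : Set (Gr → ZMod 2)) =
            Submodule.span (ZMod 2) ({fA A, e0} : Set (Gr → ZMod 2)) := by
          rw [show ({fA A, e0, 0} : Set (Gr → ZMod 2)) = insert 0 {fA A, e0} by
            ext x; simp [Set.mem_insert_iff]; tauto]
          exact Submodule.span_insert_zero
        rw [this]
        exact rank_span_le _
    _ ≤ 2 := by
        apply le_trans (Cardinal.mk_insert_le)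
        rw [Cardinal.mk_singleton]
        norm_num

lemma pconn_isoClosed (A : Set ℕ) : IsoClosed (Pconn A) := by
  rintro G H ⟨e⟩
  have hcard : G.1 = H.1 := by
    have := Fintype.card_congr e.toEquiv
    simpa using this
  unfold Pconn
  rw [Set.mem_setOf_eq, Set.mem_setOf_eq, e.connected_iff, hcard]

/-- there are continuum many graph properties `P` whose Hankel matrix
for the disjoint union operation has rank at most 2 over GF(2). -/
theorem continuum_many_low_rank_properties :
    Cardinal.continuum ≤
      Cardinal.mk {P : Set Gr // IsoClosed P ∧ hankelRank grSum P ≤ 2} := by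
  have hF : Function.Injective
      (fun A : Set ℕ => (⟨Pconn (Nat.succ '' A),
        pconn_isoClosed _, rank_le_two _⟩ :
        {P : Set Gr // IsoClosed P ∧ hankelRank grSum P ≤ 2})) := by
    intro A B hAB
    have h : Pconn (Nat.succ '' A) = Pconn (Nat.succ '' B) := congrArg Subtype.val hAB
    ext n
    have key : ∀ C : Set ℕ, (⟨n + 1, (⊤ : SimpleGraph (Fin (n + 1)))⟩ : Gr) ∈
        Pconn (Nat.succ '' C) ↔ n ∈ C := by
      intro C
      unfold Pconn
      rw [Set.mem_setOf_eq]
      constructor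
      · rintro ⟨-, m, hm, hmn⟩
        have hmn' : m + 1 = n + 1 := hmn
        obtain rfl : m = n := by omega
        exact hm
      · intro hn
        exact ⟨connected_top, ⟨n, hn, rfl⟩⟩
    rw [← key A, h, key B]
  calc Cardinal.continuum = Cardinal.mk (Set ℕ) := by
        rw [Cardinal.mk_set, Cardinal.mk_nat, Cardinal.two_power_aleph0]
    _ ≤ _ := Cardinal.mk_le_of_injective hF
end

section
/- The Hankel matrix H(⋈, connectivity) for the join operation and the property of being connected has rank at most 3 over GF(2). -/
open SimpleGraph

/-- Join of two finite graphs: disjoint union plus all edges between the two sides,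
re-indexed along `Fin m ⊕ Fin n ≃ Fin (m + n)`. -/
def grJoin (G H : Gr) : Gr :=
  ⟨G.1 + H.1,
    ((G.2 ⊕g H.2) ⊔ completeBipartiteGraph (Fin G.1) (Fin H.1)).map finSumFinEquiv.toEmbedding⟩

section Aux

variable {α β : Type*}

lemma joinGraph_connected [Nonempty α] [Nonempty β]
    (A : SimpleGraph α) (B : SimpleGraph β) :
    ((A ⊕g B) ⊔ completeBipartiteGraph α β).Connected := by
  rw [connected_iff]
  have key : ∀ (a : α) (b : β),
      ((A ⊕g B) ⊔ completeBipartiteGraph α β).Adj (.inl a) (.inr b) := by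
    intro a b
    exact Or.inr (by simp [completeBipartiteGraph])
  obtain ⟨b0⟩ := ‹Nonempty β›
  obtain ⟨a0⟩ := ‹Nonempty α›
  refine ⟨fun u v => ?_, inferInstance⟩
  cases u with
  | inl a =>
    cases v with
    | inl a' => exact ((key a b0).reachable).trans ((key a' b0).symm.reachable)
    | inr b => exact (key a b).reachable
  | inr b =>
    cases v with
    | inl a => exact (key a b).symm.reachable
    | inr b' => exact ((key a0 b).symm.reachable).trans (key a0 b').reachable

/-- If the right side is empty, the join is isomorphic to the left graph. -/
def joinEmptyIsoL [IsEmpty β] (A : SimpleGraph α) (B : SimpleGraph β) :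
    ((A ⊕g B) ⊔ completeBipartiteGraph α β) ≃g A where
  toEquiv := Equiv.sumEmpty α β
  map_rel_iff' := by
    rintro (a | b) (a' | b') <;> first
      | exact isEmptyElim ‹β›
      | simp

/-- If the left side is empty, the join is isomorphic to the right graph. -/
def joinEmptyIsoR [IsEmpty α] (A : SimpleGraph α) (B : SimpleGraph β) :
    ((A ⊕g B) ⊔ completeBipartiteGraph α β) ≃g B where
  toEquiv := Equiv.emptySum α β
  map_rel_iff' := by
    rintro (a | b) (a' | b') <;> first
      | exact isEmptyElim ‹α›
      | simp

lemma grJoin_connected_iff (G H : Gr) :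
    (grJoin G H).2.Connected ↔
      ((G.1 ≠ 0 ∧ H.1 ≠ 0) ∨ (H.1 = 0 ∧ G.2.Connected) ∨ (G.1 = 0 ∧ H.2.Connected)) := by
  rw [show (grJoin G H).2.Connected
      ↔ ((G.2 ⊕g H.2) ⊔ completeBipartiteGraph (Fin G.1) (Fin H.1)).Connected from
    (Iso.map finSumFinEquiv _).connected_iff.symm]
  by_cases hG : G.1 = 0
  · haveI : IsEmpty (Fin G.1) := by rw [hG]; infer_instance
    rw [(joinEmptyIsoR G.2 H.2).connected_iff]
    constructor
    · intro h; exact Or.inr (Or.inr ⟨hG, h⟩)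
    · rintro (⟨h1, _⟩ | ⟨_, hc⟩ | ⟨_, h⟩)
      · exact absurd hG h1
      · exact absurd hc.nonempty (not_nonempty_iff.mpr ‹_›)
      · exact h
  · by_cases hH : H.1 = 0
    · haveI : IsEmpty (Fin H.1) := by rw [hH]; infer_instance
      rw [(joinEmptyIsoL G.2 H.2).connected_iff]
      constructor
      · intro h; exact Or.inr (Or.inl ⟨hH, h⟩)
      · rintro (⟨_, h1⟩ | ⟨_, hc⟩ | ⟨hG0, _⟩)
        · exact absurd hH h1
        · exact hc
        · exact absurd hG0 hG
    · haveI : Nonempty (Fin G.1) := ⟨⟨0, Nat.pos_of_ne_zero hG⟩⟩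
      haveI : Nonempty (Fin H.1) := ⟨⟨0, Nat.pos_of_ne_zero hH⟩⟩
      simp only [iff_true_intro (joinGraph_connected G.2 H.2), true_iff]
      exact Or.inl ⟨hG, hH⟩

/-- Three representative graphs. -/
noncomputable def grRep : Fin 3 → Gr
  | 0 => ⟨0, ⊥⟩
  | 1 => ⟨1, ⊥⟩
  | 2 => ⟨2, ⊥⟩

lemma bot_fin_one_connected : (⊥ : SimpleGraph (Fin 1)).Connected := by
  rw [connected_iff]
  exact ⟨fun u v => by rw [Subsingleton.elim u v], ⟨0⟩⟩

lemma row_mem_range (G : Gr) :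
    hankelRow grJoin {G : Gr | G.2.Connected} G ∈
      Set.range (fun i => hankelRow grJoin {G : Gr | G.2.Connected} (grRep i)) := by
  classical
  by_cases hG : G.1 = 0
  · refine ⟨0, funext fun H => ?_⟩
    simp only [hankelRow, Set.mem_setOf_eq, grJoin_connected_iff, grRep]
    have h0 : ¬ G.2.Connected := fun hc =>
      absurd hc.nonempty (by rw [hG]; exact not_nonempty_iff.mpr inferInstance)
    have h0' : ¬ (⊥ : SimpleGraph (Fin 0)).Connected := fun hc =>
      absurd hc.nonempty (not_nonempty_iff.mpr inferInstance)
    by_cases hH : H.1 = 0 <;> simp [hG, hH, h0, h0']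
  · by_cases hc : G.2.Connected
    · refine ⟨1, funext fun H => ?_⟩
      simp only [hankelRow, Set.mem_setOf_eq, grJoin_connected_iff, grRep]
      by_cases hH : H.1 = 0 <;> simp [hG, hH, hc, bot_fin_one_connected]
    · refine ⟨2, funext fun H => ?_⟩
      simp only [hankelRow, Set.mem_setOf_eq, grJoin_connected_iff, grRep]
      have h2 : ¬ (⊥ : SimpleGraph (Fin 2)).Connected := not_connected_bot
      by_cases hH : H.1 = 0 <;> simp [hG, hH, hc, h2]

end Aux

/-- the Hankel matrix of the join operation and connectivity has
rank at most 3 over GF(2). -/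
theorem hankel_join_connected_rank_le_three :
    hankelRank grJoin {G : Gr | G.2.Connected} ≤ 3 := by
  classical
  have hsub : Set.range (hankelRow grJoin {G : Gr | G.2.Connected}) ⊆
      Set.range (fun i : Fin 3 => hankelRow grJoin {G : Gr | G.2.Connected} (grRep i)) := by
    rintro _ ⟨G, rfl⟩
    exact row_mem_range G
  calc hankelRank grJoin {G : Gr | G.2.Connected}
      ≤ Module.rank (ZMod 2) (Submodule.span (ZMod 2)
        (Set.range (fun i : Fin 3 => hankelRow grJoin {G : Gr | G.2.Connected} (grRep i)))) :=
        Submodule.rank_mono (Submodule.span_mono hsub)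
    _ ≤ Cardinal.mk ↥(Set.range (fun i : Fin 3 => hankelRow grJoin {G : Gr | G.2.Connected} (grRep i))) :=
        rank_span_le _
    _ ≤ Cardinal.mk (Fin 3) := Cardinal.mk_range_le
    _ = 3 := by simp
end

section
/- If an isomorphism-invariant binary operation ⊡ on structures is smooth with respect to a logic L having, for each quantifier rank q, only finitely many inequivalent sentences of rank ≤ q, and P is definable by an L-sentence of quantifier rank q, then the Hankel matrix H(⊡, P) has finite rank over GF(2). -/
/-! A row `b ↦ [op a b ∈ P]` of the Hankel matrix depends only on the class of `a`: replacing
`a` by an equivalent structure does not change the class of `op a b`, and `P` is a union of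
classes. So the matrix has at most as many distinct rows as there are classes, and finitely
many vectors span a space of finite rank. -/

theorem Setoid.finite_range_of_rel_imp_eq {S α : Type*} (E : Setoid S) [Finite (Quotient E)]
    (f : S → α) (hf : ∀ a a', E.r a a' → f a = f a') : (Set.range f).Finite :=
  Set.range_quotient_lift (s := E) hf ▸ Set.finite_range _

theorem rank_span_range_lt_aleph0_of_rel_imp_eq {R M S : Type*} [Ring R] [StrongRankCondition R]
    [AddCommGroup M] [Module R M] (E : Setoid S) [Finite (Quotient E)]
    (f : S → M) (hf : ∀ a a', E.r a a' → f a = f a') :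
    Module.rank R (Submodule.span R (Set.range f)) < Cardinal.aleph0 :=
  (rank_span_le _).trans_lt <|
    Cardinal.lt_aleph0_iff_set_finite.mpr (E.finite_range_of_rel_imp_eq f hf)

open Classical in
/-- Finite Rank Theorem, abstract form: if there is an equivalence
relation `E` on structures with finitely many classes such that the class of
`op a b` depends only on the classes of `a` and `b` (smoothness), and the property
`P` is a union of `E`-classes (definability), then the Hankel matrix of `op` and
`P` has finite rank over GF(2). -/
theorem hankel_finite_rank_of_smooth {S : Type*} (E : Setoid S) [Finite (Quotient E)]
    (op : S → S → S)
    (hcong : ∀ a a' b b', E.r a a' → E.r b b' → E.r (op a b) (op a' b'))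
    (P : Set S) (hP : ∀ a b, E.r a b → (a ∈ P ↔ b ∈ P)) :
    Module.rank (ZMod 2) (Submodule.span (ZMod 2)
        (Set.range (fun a : S => fun b : S => if op a b ∈ P then (1 : ZMod 2) else 0)))
      < Cardinal.aleph0 := by
  refine rank_span_range_lt_aleph0_of_rel_imp_eq E _ fun a a' h => funext fun b => ?_
  simp only [hP _ _ (hcong a a' b b h (E.refl b))]
end

section
/- If Duplicator wins the q-round MSO EF-game on (G_1, G_1') and on (G_2, G_2'), then Duplicator wins the q-round MSO EF-game on (G_1 ⊔ G_2, G_1' ⊔ G_2'); that is, the disjoint union operation on graphs preserves q-equivalence in monadic second-order logic: if G_1 ≡_q^MSOL G_1' and G_2 ≡_q^MSOL G_2', then G_1 ⊔ G_2 ≡_q^MSOL G_1' ⊔ G_2'. -/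
open SimpleGraph

/-- Duplicator wins the `q`-round MSO Ehrenfeucht–Fraïssé game on the graphs
`G` and `G'`, starting from a position in which the elements `e : Fin n → α` and
sets `S : Fin m → Set α` have been chosen in `G`, matched with `e'` and `S'` in `G'`.
In each round Spoiler picks an element or a set in one of the two graphs and
Duplicator answers in the other; after `q` rounds the chosen tuples must form a
partial isomorphism respecting the chosen sets. -/
def DupWins {α β : Type*} (G : SimpleGraph α) (G' : SimpleGraph β) :
    (q : ℕ) → {n m : ℕ} → (Fin n → α) → (Fin n → β) → (Fin m → Set α) → (Fin m → Set β) → Prop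
  | 0, _, _, e, e', S, S' =>
      (∀ i j, e i = e j ↔ e' i = e' j) ∧
      (∀ i j, G.Adj (e i) (e j) ↔ G'.Adj (e' i) (e' j)) ∧
      (∀ i k, e i ∈ S k ↔ e' i ∈ S' k)
  | q + 1, _, _, e, e', S, S' =>
      (∀ a : α, ∃ b : β, DupWins G G' q (Fin.cons a e) (Fin.cons b e') S S') ∧
      (∀ b : β, ∃ a : α, DupWins G G' q (Fin.cons a e) (Fin.cons b e') S S') ∧
      (∀ T : Set α, ∃ T' : Set β, DupWins G G' q e e' (Fin.cons T S) (Fin.cons T' S')) ∧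
      (∀ T' : Set β, ∃ T : Set α, DupWins G G' q e e' (Fin.cons T S) (Fin.cons T' S'))

private lemma cons_comp {γ : Type*} {n n' : ℕ} (a : γ) (e : Fin n → γ) (f : Fin n' → Fin n) :
    Fin.cons a (e ∘ f) = (Fin.cons a e : Fin (n+1) → γ) ∘
      (fun i => Fin.cases 0 (fun j => (f j).succ) i) := by
  funext i
  refine Fin.cases ?_ (fun j => ?_) i <;> simp

private lemma dupWins_reindex {α β : Type*} {G : SimpleGraph α} {G' : SimpleGraph β} :
    ∀ (q : ℕ) {n m n' m' : ℕ} {e : Fin n → α} {e' : Fin n → β}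
      {S : Fin m → Set α} {S' : Fin m → Set β} (f : Fin n' → Fin n) (g : Fin m' → Fin m),
      DupWins G G' q e e' S S' → DupWins G G' q (e ∘ f) (e' ∘ f) (S ∘ g) (S' ∘ g) := by
  intro q
  induction q with
  | zero =>
    intro n m n' m' e e' S S' f g h
    exact ⟨fun i j => h.1 (f i) (f j), fun i j => h.2.1 (f i) (f j),
      fun i k => h.2.2 (f i) (g k)⟩
  | succ q ih =>
    intro n m n' m' e e' S S' f g h
    refine ⟨?_, ?_, ?_, ?_⟩
    · intro a
      obtain ⟨b, hb⟩ := h.1 a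
      refine ⟨b, ?_⟩
      rw [cons_comp a e f, cons_comp b e' f]
      exact ih _ g hb
    · intro b
      obtain ⟨a, ha⟩ := h.2.1 b
      refine ⟨a, ?_⟩
      rw [cons_comp a e f, cons_comp b e' f]
      exact ih _ g ha
    · intro T
      obtain ⟨T', hT⟩ := h.2.2.1 T
      refine ⟨T', ?_⟩
      rw [cons_comp T S g, cons_comp T' S' g]
      exact ih f _ hT
    · intro T'
      obtain ⟨T, hT⟩ := h.2.2.2 T'
      refine ⟨T, ?_⟩
      rw [cons_comp T S g, cons_comp T' S' g]
      exact ih f _ hT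

private lemma dupWins_mono {α β : Type*} {G : SimpleGraph α} {G' : SimpleGraph β}
    {q n m : ℕ} {e : Fin n → α} {e' : Fin n → β} {S : Fin m → Set α} {S' : Fin m → Set β}
    (h : DupWins G G' (q+1) e e' S S') : DupWins G G' q e e' S S' := by
  obtain ⟨T', hT⟩ := h.2.2.1 ∅
  have h2 := dupWins_reindex q id Fin.succ hT
  have hS : (Fin.cons ∅ S : Fin (m+1) → Set α) ∘ Fin.succ = S := funext fun k => Fin.cons_succ _ _ _
  have hS' : (Fin.cons T' S' : Fin (m+1) → Set β) ∘ Fin.succ = S' := funext fun k => Fin.cons_succ _ _ _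
  rwa [hS, hS', Function.comp_id, Function.comp_id] at h2

private lemma cons_elim_left {α₁ α₂ : Type*} {n₁ n₂ n : ℕ} (a : α₁)
    (e₁ : Fin n₁ → α₁) (e₂ : Fin n₂ → α₂) (f : Fin n → Fin n₁ ⊕ Fin n₂) :
    (Fin.cons (Sum.inl a) (fun i => Sum.elim (Sum.inl ∘ e₁) (Sum.inr ∘ e₂) (f i)) :
        Fin (n+1) → α₁ ⊕ α₂) =
      fun i => Sum.elim (Sum.inl ∘ Fin.cons a e₁) (Sum.inr ∘ e₂)
        ((Fin.cons (Sum.inl 0) (Sum.map Fin.succ id ∘ f) : Fin (n+1) → Fin (n₁+1) ⊕ Fin n₂) i) := by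
  funext i
  refine Fin.cases ?_ (fun j => ?_) i
  · simp
  · simp only [Fin.cons_succ, Function.comp]
    rcases f j with k | k <;> simp

private lemma cons_elim_right {α₁ α₂ : Type*} {n₁ n₂ n : ℕ} (a : α₂)
    (e₁ : Fin n₁ → α₁) (e₂ : Fin n₂ → α₂) (f : Fin n → Fin n₁ ⊕ Fin n₂) :
    (Fin.cons (Sum.inr a) (fun i => Sum.elim (Sum.inl ∘ e₁) (Sum.inr ∘ e₂) (f i)) :
        Fin (n+1) → α₁ ⊕ α₂) =
      fun i => Sum.elim (Sum.inl ∘ e₁) (Sum.inr ∘ Fin.cons a e₂)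
        ((Fin.cons (Sum.inr 0) (Sum.map id Fin.succ ∘ f) : Fin (n+1) → Fin n₁ ⊕ Fin (n₂+1)) i) := by
  funext i
  refine Fin.cases ?_ (fun j => ?_) i
  · simp
  · simp only [Fin.cons_succ, Function.comp]
    rcases f j with k | k <;> simp

private lemma preim_cons {γ δ : Type*} {m : ℕ} (ι : γ → δ) (T : Set δ) (S : Fin m → Set δ) :
    (fun k => ι ⁻¹' (Fin.cons T S : Fin (m+1) → Set δ) k) =
      (Fin.cons (ι ⁻¹' T) (fun k => ι ⁻¹' S k) : Fin (m+1) → Set γ) := by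
  funext k
  refine Fin.cases ?_ (fun j => ?_) k <;> simp

private lemma dupWins_sum_aux {α₁ β₁ α₂ β₂ : Type*}
    (G₁ : SimpleGraph α₁) (G₁' : SimpleGraph β₁)
    (G₂ : SimpleGraph α₂) (G₂' : SimpleGraph β₂) (q : ℕ) :
    ∀ {n₁ n₂ m n : ℕ} (e₁ : Fin n₁ → α₁) (e₁' : Fin n₁ → β₁)
      (e₂ : Fin n₂ → α₂) (e₂' : Fin n₂ → β₂)
      (S : Fin m → Set (α₁ ⊕ α₂)) (S' : Fin m → Set (β₁ ⊕ β₂))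
      (f : Fin n → Fin n₁ ⊕ Fin n₂),
      DupWins G₁ G₁' q e₁ e₁' (fun k => Sum.inl ⁻¹' S k) (fun k => Sum.inl ⁻¹' S' k) →
      DupWins G₂ G₂' q e₂ e₂' (fun k => Sum.inr ⁻¹' S k) (fun k => Sum.inr ⁻¹' S' k) →
      DupWins (G₁ ⊕g G₂) (G₁' ⊕g G₂') q
        (fun i => Sum.elim (Sum.inl ∘ e₁) (Sum.inr ∘ e₂) (f i))
        (fun i => Sum.elim (Sum.inl ∘ e₁') (Sum.inr ∘ e₂') (f i)) S S' := by
  induction q with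
  | zero =>
    intro n₁ n₂ m n e₁ e₁' e₂ e₂' S S' f h₁ h₂
    refine ⟨fun i j => ?_, fun i j => ?_, fun i k => ?_⟩
    · rcases hi : f i with a | a <;> rcases hj : f j with b | b <;> simp [hi, hj]
      · exact h₁.1 a b
      · exact h₂.1 a b
    · rcases hi : f i with a | a <;> rcases hj : f j with b | b <;> simp [hi, hj, SimpleGraph.sum_adj]
      · exact h₁.2.1 a b
      · exact h₂.2.1 a b
    · rcases hi : f i with a | a <;> simp [hi]
      · simpa using h₁.2.2 a k
      · simpa using h₂.2.2 a k
  | succ q ih =>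
    intro n₁ n₂ m n e₁ e₁' e₂ e₂' S S' f h₁ h₂
    refine ⟨?_, ?_, ?_, ?_⟩
    · rintro (a | a)
      · obtain ⟨b, hb⟩ := h₁.1 a
        refine ⟨Sum.inl b, ?_⟩
        rw [cons_elim_left a e₁ e₂ f, cons_elim_left b e₁' e₂' f]
        exact ih _ _ _ _ _ _ _ hb (dupWins_mono h₂)
      · obtain ⟨b, hb⟩ := h₂.1 a
        refine ⟨Sum.inr b, ?_⟩
        rw [cons_elim_right a e₁ e₂ f, cons_elim_right b e₁' e₂' f]
        exact ih _ _ _ _ _ _ _ (dupWins_mono h₁) hb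
    · rintro (b | b)
      · obtain ⟨a, ha⟩ := h₁.2.1 b
        refine ⟨Sum.inl a, ?_⟩
        rw [cons_elim_left a e₁ e₂ f, cons_elim_left b e₁' e₂' f]
        exact ih _ _ _ _ _ _ _ ha (dupWins_mono h₂)
      · obtain ⟨a, ha⟩ := h₂.2.1 b
        refine ⟨Sum.inr a, ?_⟩
        rw [cons_elim_right a e₁ e₂ f, cons_elim_right b e₁' e₂' f]
        exact ih _ _ _ _ _ _ _ (dupWins_mono h₁) ha
    · intro T
      obtain ⟨T₁', h1⟩ := h₁.2.2.1 (Sum.inl ⁻¹' T)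
      obtain ⟨T₂', h2⟩ := h₂.2.2.1 (Sum.inr ⁻¹' T)
      refine ⟨{x | Sum.elim (· ∈ T₁') (· ∈ T₂') x}, ?_⟩
      have := ih e₁ e₁' e₂ e₂' (Fin.cons T S) (Fin.cons {x | Sum.elim (· ∈ T₁') (· ∈ T₂') x} S') f ?_ ?_
      · exact this
      · rw [preim_cons, preim_cons]
        convert h1 using 2
        rfl
      · rw [preim_cons, preim_cons]
        convert h2 using 2
        rfl
    · intro T'
      obtain ⟨T₁, h1⟩ := h₁.2.2.2 (Sum.inl ⁻¹' T')
      obtain ⟨T₂, h2⟩ := h₂.2.2.2 (Sum.inr ⁻¹' T')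
      refine ⟨{x | Sum.elim (· ∈ T₁) (· ∈ T₂) x}, ?_⟩
      have := ih e₁ e₁' e₂ e₂' (Fin.cons {x | Sum.elim (· ∈ T₁) (· ∈ T₂) x} S) (Fin.cons T' S') f ?_ ?_
      · exact this
      · rw [preim_cons, preim_cons]
        convert h1 using 2
        rfl
      · rw [preim_cons, preim_cons]
        convert h2 using 2
        rfl

/-- Feferman–Vaught / smoothness of disjoint union for MSOL: if
Duplicator wins the `q`-round MSO EF-game on `(G₁, G₁')` and on `(G₂, G₂')`
(from the empty position), then Duplicator wins the `q`-round MSO EF-game on the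
disjoint unions `(G₁ ⊕g G₂, G₁' ⊕g G₂')`. -/
theorem dupWins_disjoint_union {α₁ β₁ α₂ β₂ : Type*}
    (G₁ : SimpleGraph α₁) (G₁' : SimpleGraph β₁)
    (G₂ : SimpleGraph α₂) (G₂' : SimpleGraph β₂) (q : ℕ)
    (h₁ : DupWins G₁ G₁' q Fin.elim0 Fin.elim0 Fin.elim0 Fin.elim0)
    (h₂ : DupWins G₂ G₂' q Fin.elim0 Fin.elim0 Fin.elim0 Fin.elim0) :
    DupWins (G₁ ⊕g G₂) (G₁' ⊕g G₂') q Fin.elim0 Fin.elim0 Fin.elim0 Fin.elim0 := by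
  have h := dupWins_sum_aux G₁ G₁' G₂ G₂' q
    (n₁ := 0) (n₂ := 0) (m := 0) (n := 0)
    Fin.elim0 Fin.elim0 Fin.elim0 Fin.elim0 Fin.elim0 Fin.elim0 Fin.elim0 ?_ ?_
  · convert h using 2 <;> funext i <;> exact i.elim0
  · convert h₁ using 2 <;> funext k <;> exact k.elim0
  · convert h₂ using 2 <;> funext k <;> exact k.elim0
end
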